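/- arXiv:2106.09299 — 2 statements merged into one kernel-verified Lean document; each statement's English description precedes it below -/
import Mathlib

section
/- Let H ⊂ F(T) be a covering family, {f; f_t, t ∈ T} ⊂ Γ(X) and E ∩ dom f ≠ ∅. Then H-reverse strong duality holds (i.e., min(P) = sup(D_H) ∈ ℝ, the primal value being attained) if and only if the function φ_H is subdifferentiable at 0_{X*}; in that case ∂φ_H(0_{X*}) = sol(P), the set of optimal solutions of (P). -/
open Pointwise Filter Topology

noncomputable section

section Defs

variable {T : Type*} {X : Type*} [AddCommGroup X] [Module ℝ X] [TopologicalSpace X]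
  [IsTopologicalAddGroup X] [ContinuousSMul ℝ X] [LocallyConvexSpace ℝ X] [T2Space X]

/-- The epigraph of an extended-real-valued function, as a subset of `Z × ℝ`. -/
def epiSet {Z : Type*} (f : Z → EReal) : Set (Z × ℝ) := {p | f p.1 ≤ (p.2 : EReal)}

/-- `f : Z → ℝ ∪ {+∞}` is a proper convex function (never `⊥`, not identically `⊤`,
with convex epigraph). -/
def IsProperConvex {Z : Type*} [AddCommGroup Z] [Module ℝ Z] (f : Z → EReal) : Prop :=
  (∀ x, f x ≠ ⊥) ∧ (∃ x, f x ≠ ⊤) ∧ Convex ℝ (epiSet f)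

/-- Membership in `Γ(Z)`: proper convex and lower semicontinuous. -/
def InGamma {Z : Type*} [AddCommGroup Z] [Module ℝ Z] [TopologicalSpace Z] (f : Z → EReal) : Prop :=
  IsProperConvex f ∧ LowerSemicontinuous f

/-- The Lagrangian `f + ∑_{t ∈ H} λ_t f_t` (with the convention `0·(+∞) = 0`,
which holds for `EReal` multiplication). -/
def lagFn (f : X → EReal) (ft : T → X → EReal) (H : Finset T) (lam : T → ℝ) : X → EReal :=
  fun x => f x + ∑ t ∈ H, (lam t : EReal) * ft t x

/-- The feasible set `E` of (P). -/
def feasSet (ft : T → X → EReal) : Set X := {x | ∀ t, ft t x ≤ 0}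

/-- The optimal value `inf (P)`. -/
def primalVal (f : X → EReal) (ft : T → X → EReal) : EReal := ⨅ x ∈ feasSet ft, f x

/-- The optimal solution set `sol (P)`. -/
def solP (f : X → EReal) (ft : T → X → EReal) : Set X :=
  {x | x ∈ feasSet ft ∧ f x = primalVal f ft}

/-- The optimal value `sup (D_H)` of the `H`-dual problem. -/
def dualVal (f : X → EReal) (ft : T → X → EReal) (Hfam : Set (Finset T)) : EReal :=
  ⨆ H ∈ Hfam, ⨆ lam ∈ {l : T → ℝ | ∀ t ∈ H, 0 ≤ l t}, ⨅ x : X, lagFn f ft H lam x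

/-- The optimal value `sup (D)` of the classical Lagrangian-Haar dual, with
multipliers `λ ∈ ℝ_+^{(T)}` (finitely supported). -/
def dualHaar (f : X → EReal) (ft : T → X → EReal) : EReal :=
  ⨆ lam ∈ {l : T →₀ ℝ | ∀ t, 0 ≤ l t},
    ⨅ x : X, f x + ∑ t ∈ lam.support, ((lam t : ℝ) : EReal) * ft t x

/-- `sup (D_m)`: ordinary Lagrangian dual of the finite subproblem `(P_m)`. -/
def dualValFin (f : X → EReal) (ft : ℕ → X → EReal) (m : ℕ) : EReal :=
  ⨆ lam ∈ {l : ℕ → ℝ | ∀ k ∈ Finset.range m, 0 ≤ l k},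
    ⨅ x : X, f x + ∑ k ∈ Finset.range m, (lam k : EReal) * ft k x

/-- `inf (P_m)`: optimal value of the finite subproblem `(P_m)`. -/
def primalValFin (f : X → EReal) (ft : ℕ → X → EReal) (m : ℕ) : EReal :=
  ⨅ x ∈ {x : X | ∀ k ∈ Finset.range m, ft k x ≤ 0}, f x

/-- A family of finite subsets of `T` is covering if its union is all of `T`. -/
def CoveringFam (Hfam : Set (Finset T)) : Prop := (⋃ H ∈ Hfam, (H : Set T)) = Set.univ

/-- A family of finite subsets of `T` is directed (by inclusion). -/
def DirectedFam (Hfam : Set (Finset T)) : Prop :=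
  ∀ H ∈ Hfam, ∀ K ∈ Hfam, ∃ L ∈ Hfam, (H : Set T) ∪ (K : Set T) ⊆ (L : Set T)

/-- Legendre-Fenchel conjugate of `f : X → ℝ̄`, as a function on the dual `X*`
(with its weak* topology). -/
def conj (f : X → EReal) (p : WeakDual ℝ X) : EReal := ⨆ x : X, ((p x : EReal) - f x)

/-- Legendre-Fenchel conjugate of `g : X* → ℝ̄` w.r.t. the duality `⟨X*, X⟩`. -/
def conjDual (g : WeakDual ℝ X → EReal) (x : X) : EReal :=
  ⨆ p : WeakDual ℝ X, ((p x : EReal) - g p)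

/-- The function `φ_H := inf_{H ∈ 𝓗, λ ∈ ℝ_+^H} (f + ∑_{t ∈ H} λ_t f_t)^*`. -/
def phiVal (f : X → EReal) (ft : T → X → EReal) (Hfam : Set (Finset T))
    (p : WeakDual ℝ X) : EReal :=
  ⨅ H ∈ Hfam, ⨅ lam ∈ {l : T → ℝ | ∀ t ∈ H, 0 ≤ l t}, conj (lagFn f ft H lam) p

/-- Subdifferential at `a ∈ X*` of a function `g : X* → ℝ̄`, a subset of `X`
(empty when `g a ∉ ℝ`). -/
def dualSubdiff (g : WeakDual ℝ X → EReal) (a : WeakDual ℝ X) : Set X :=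
  {x | (g a ≠ ⊤ ∧ g a ≠ ⊥) ∧ ∀ q : WeakDual ℝ X, g a + (((q x - a x : ℝ)) : EReal) ≤ g q}

/-- Fenchel subdifferential of `g : X → ℝ̄` at `x̄ ∈ X`, a subset of `X*`. -/
def fenchelSubdiff (g : X → EReal) (xb : X) : Set (WeakDual ℝ X) :=
  {p | ∀ x, g xb + (((p x - p xb : ℝ)) : EReal) ≤ g x}

/-- The set `𝓐_H = ⋃_{H ∈ 𝓗, λ ∈ ℝ_+^H} epi (f + ∑_{t∈H} λ_t f_t)^* ⊆ X* × ℝ`. -/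
def AHset (f : X → EReal) (ft : T → X → EReal) (Hfam : Set (Finset T)) :
    Set (WeakDual ℝ X × ℝ) :=
  ⋃ H ∈ Hfam, ⋃ lam ∈ {l : T → ℝ | ∀ t ∈ H, 0 ≤ l t}, epiSet (conj (lagFn f ft H lam))

/-- `A` is closed convex regarding `B`: `cl (co A) ∩ B = A ∩ B`. -/
def ClosedConvexRegarding {Z : Type*} [AddCommGroup Z] [Module ℝ Z] [TopologicalSpace Z]
    (A B : Set Z) : Prop :=
  closure (convexHull ℝ A) ∩ B = A ∩ B

/-- Recession cone of a set. -/
def recCone {Z : Type*} [AddCommGroup Z] [SMul ℝ Z] (A : Set Z) : Set Z :=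
  {v | ∀ a ∈ A, ∀ r : ℝ, 0 ≤ r → a + r • v ∈ A}

/-- Recession function `h_∞`, defined through `epi h_∞ = (epi h)_∞`. -/
def recFn (h : X → EReal) (x : X) : EReal :=
  ⨅ r ∈ {r : ℝ | (x, r) ∈ recCone (epiSet h)}, (r : EReal)

/-- The recession cone `(P)_∞ = ∩_{t∈T} [(f_t)_∞ ≤ 0] ∩ [f_∞ ≤ 0]` of problem (P). -/
def PinfSet (f : X → EReal) (ft : T → X → EReal) : Set X :=
  {x | recFn f x ≤ 0 ∧ ∀ t, recFn (ft t) x ≤ 0}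

/-- A subset is a linear subspace. -/
def IsLinSubspace {Z : Type*} [AddCommGroup Z] [Module ℝ Z] (S : Set Z) : Prop :=
  ∃ V : Submodule ℝ Z, S = ↑V

/-- Negative polar cone `A^-` of a set `A ⊆ X*`. -/
def negPolar (A : Set (WeakDual ℝ X)) : Set X := {x | ∀ p ∈ A, p x ≤ 0}

/-- The convex cone generated by a set: `cone A = ℝ₊ (co A)`. -/
def coneGen {Z : Type*} [AddCommGroup Z] [Module ℝ Z] (A : Set Z) : Set Z :=
  {z | ∃ r : ℝ, 0 ≤ r ∧ ∃ a ∈ convexHull ℝ A, z = r • a}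

/-- A set is weakly compact: compact for the weak topology `σ(X, X*)`. -/
def WeaklyCompactSet (S : Set X) : Prop := IsCompact (toWeakSpace ℝ X '' S)

/-- A set is weakly locally compact: locally compact in the weak topology. -/
def WeaklyLocallyCompactSet (S : Set X) : Prop :=
  LocallyCompactSpace ↥(toWeakSpace ℝ X '' S)

/-- `h` is weakly inf-locally compact: every sublevel set `[h ≤ r]`, `r ∈ ℝ`,
is weakly locally compact. -/
def InfWeaklyLocallyCompact (h : X → EReal) : Prop :=
  ∀ r : ℝ, WeaklyLocallyCompactSet {x | h x ≤ (r : EReal)}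

/-- The Mackey topology `τ(X*, X)` on `X*`: the topology of uniform convergence on
convex balanced weakly compact subsets of `X`. -/
def mackeyTopology (X : Type*) [AddCommGroup X] [Module ℝ X] [TopologicalSpace X]
    [IsTopologicalAddGroup X] [ContinuousSMul ℝ X] [LocallyConvexSpace ℝ X] [T2Space X] :
    TopologicalSpace (WeakDual ℝ X) :=
  TopologicalSpace.induced
    (fun p => UniformOnFun.ofFun {K : Set X | Convex ℝ K ∧ Balanced ℝ K ∧ WeaklyCompactSet K}
      (fun x => p x))
    inferInstance

/-- Interior of `S` relative to `A` for the topology `τ`. -/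
def relIntIn {Z : Type*} (τ : TopologicalSpace Z) (A S : Set Z) : Set Z :=
  {z | z ∈ S ∧ ∃ U, τ.IsOpen U ∧ z ∈ U ∧ U ∩ A ⊆ S}

/-- `g : X* → ℝ̄` is `τ(X*,X)`-quasicontinuous: the affine hull of `dom g` is
Mackey-closed and of finite codimension, the Mackey relative interior of `dom g`
is non-empty, and the restriction of `g` to `aff (dom g)` is Mackey-continuous
on `ri (dom g)`. -/
def MackeyQuasicontinuous (g : WeakDual ℝ X → EReal) : Prop :=
  @IsClosed _ (mackeyTopology X)
    ((affineSpan ℝ {p : WeakDual ℝ X | g p ≠ ⊤}) : Set (WeakDual ℝ X)) ∧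
  FiniteDimensional ℝ (WeakDual ℝ X ⧸ (affineSpan ℝ {p : WeakDual ℝ X | g p ≠ ⊤}).direction) ∧
  (relIntIn (mackeyTopology X) ((affineSpan ℝ {p : WeakDual ℝ X | g p ≠ ⊤}) : Set (WeakDual ℝ X))
    {p : WeakDual ℝ X | g p ≠ ⊤}).Nonempty ∧
  ∀ p ∈ relIntIn (mackeyTopology X)
      ((affineSpan ℝ {p : WeakDual ℝ X | g p ≠ ⊤}) : Set (WeakDual ℝ X))
      {p : WeakDual ℝ X | g p ≠ ⊤},
    @ContinuousWithinAt _ _ (mackeyTopology X) _ g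
      ((affineSpan ℝ {p : WeakDual ℝ X | g p ≠ ⊤}) : Set (WeakDual ℝ X)) p

/-- The set `𝓚_H = ⋃_{H ∈ 𝓗} cone ({(a_t*, b_t) : t ∈ H} + {0} × ℝ₊)`. -/
def KHset (a : T → WeakDual ℝ X) (b : T → ℝ) (Hfam : Set (Finset T)) :
    Set (WeakDual ℝ X × ℝ) :=
  ⋃ H ∈ Hfam, coneGen ((fun t => (a t, b t)) '' (H : Set T) + ({0} ×ˢ Set.Ici (0 : ℝ)))

end Defs

/-!
Since `φ_H(0) = -sup (D_H)`, a point `x` lies in `∂φ_H(0)` exactly when `x* ↦ ⟨x*, x⟩ - sup (D_H)`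
minorizes every conjugate `(f + ∑ λ_t f_t)*`. These Lagrangians are lower semicontinuous, convex
and nowhere `-∞`, so Fenchel–Moreau (a Hahn–Banach separation in `X × ℝ`) turns this into
`f x + ∑ λ_t f_t x ≤ sup (D_H)` for all admissible multipliers. The multipliers `λ = 0` and
`λ = c e_t` with `c → ∞` give `f x ≤ sup (D_H)` and feasibility of `x`, and weak duality closes
the gap. Conversely, a feasible `x` with `f x = sup (D_H)` satisfies these inequalities because
every Lagrangian lies below `f` on the feasible set.
-/

namespace EReal

theorem neg_iSup {ι : Sort*} (g : ι → EReal) : -(⨆ i, g i) = ⨅ i, -g i :=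
  negOrderIso.map_iSup g

theorem neg_iInf {ι : Sort*} (g : ι → EReal) : -(⨅ i, g i) = ⨆ i, -g i :=
  negOrderIso.map_iInf g

theorem exists_le_le_of_add_le_coe {a b : EReal} {w : ℝ} (ha : a ≠ ⊥) (hb : b ≠ ⊥)
    (h : a + b ≤ w) : ∃ u v : ℝ, a ≤ u ∧ b ≤ v ∧ u + v = w := by
  have ha' : a ≠ ⊤ := by
    rintro rfl
    simp [top_add_of_ne_bot hb] at h
  lift a to ℝ using ⟨ha', ha⟩
  refine ⟨a, w - a, le_rfl, ?_, by ring⟩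
  rw [coe_sub, le_sub_iff_add_le (.inl (coe_ne_bot a)) (.inl (coe_ne_top a)), add_comm]
  exact h

theorem nonpos_of_forall_add_mul_le {a b : EReal} {r : ℝ} (ha : a ≠ ⊥)
    (h : ∀ c : ℝ, 0 ≤ c → a + c * b ≤ r) : b ≤ 0 := by
  by_contra! hb
  have har : a ≤ r := by simpa using h 0 le_rfl
  lift a to ℝ using ⟨(har.trans_lt (coe_lt_top r)).ne, ha⟩
  induction b with
  | bot => simp at hb
  | top => simpa [coe_mul_top_of_pos one_pos] using h 1 zero_le_one
  | coe b =>
    have hb : 0 < b := mod_cast hb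
    have har : a ≤ r := mod_cast har
    have := h ((r - a + 1) / b) (by positivity)
    rw [← coe_mul, ← coe_add, div_mul_cancel₀ _ hb.ne'] at this
    have : a + (r - a + 1) ≤ r := mod_cast this
    linarith

theorem coe_mul_le_coe_iff {c : ℝ} (hc : 0 < c) {a : EReal} {v : ℝ} :
    (c : EReal) * a ≤ v ↔ a ≤ (v / c : ℝ) := by
  rw [coe_div, le_div_iff_mul_le (mod_cast hc) (coe_ne_top c), mul_comm]

theorem continuous_coe_mul {c : ℝ} (hc : 0 < c) : Continuous fun a : EReal => (c : EReal) * a :=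
  continuous_iff_continuousAt.2 fun _ =>
    (continuousAt_mul (.inl (coe_ne_zero.2 hc.ne')) (.inl (coe_ne_zero.2 hc.ne'))
      (.inl (coe_ne_bot c)) (.inl (coe_ne_top c))).comp
        (continuous_const.prodMk continuous_id).continuousAt

end EReal

section Epigraph

variable {Z : Type*}

theorem LowerSemicontinuous.add_of_ne_bot [TopologicalSpace Z] {f g : Z → EReal}
    (hf : LowerSemicontinuous f) (hg : LowerSemicontinuous g) (hf' : ∀ x, f x ≠ ⊥)
    (hg' : ∀ x, g x ≠ ⊥) : LowerSemicontinuous fun x => f x + g x :=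
  hf.add' hg fun x => EReal.continuousAt_add (.inr (hg' x)) (.inl (hf' x))

theorem LowerSemicontinuous.coe_mul [TopologicalSpace Z] {g : Z → EReal}
    (hg : LowerSemicontinuous g) {c : ℝ} (hc : 0 ≤ c) :
    LowerSemicontinuous fun x => (c : EReal) * g x := by
  rcases hc.eq_or_lt with rfl | hc
  · simpa using lowerSemicontinuous_const
  · exact (EReal.continuous_coe_mul hc).comp_lowerSemicontinuous hg
      fun a b hab => mul_le_mul_of_nonneg_left hab (mod_cast hc.le)

theorem LowerSemicontinuous.isClosed_epiSet [TopologicalSpace Z] {L : Z → EReal}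
    (hL : LowerSemicontinuous L) : IsClosed (epiSet L) :=
  hL.isClosed_epigraph.preimage
    (continuous_fst.prodMk (continuous_coe_real_ereal.comp continuous_snd))

variable [AddCommGroup Z] [Module ℝ Z]

theorem convex_epiSet_add {f g : Z → EReal} (hf' : ∀ x, f x ≠ ⊥) (hg' : ∀ x, g x ≠ ⊥)
    (hf : Convex ℝ (epiSet f)) (hg : Convex ℝ (epiSet g)) :
    Convex ℝ (epiSet fun x => f x + g x) := by
  rintro ⟨x, w⟩ hx ⟨y, w'⟩ hy a b ha hb hab
  obtain ⟨u, v, hu, hv, rfl⟩ := EReal.exists_le_le_of_add_le_coe (hf' x) (hg' x) hx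
  obtain ⟨u', v', hu', hv', rfl⟩ := EReal.exists_le_le_of_add_le_coe (hf' y) (hg' y) hy
  have hfu := hf (show (x, u) ∈ epiSet f from hu) (show (y, u') ∈ epiSet f from hu') ha hb hab
  have hgv := hg (show (x, v) ∈ epiSet g from hv) (show (y, v') ∈ epiSet g from hv') ha hb hab
  simp only [epiSet, Set.mem_ofPred_eq, Prod.smul_mk, Prod.mk_add_mk, smul_eq_mul] at hfu hgv ⊢
  calc f (a • x + b • y) + g (a • x + b • y)
      ≤ ((a * u + b * u' : ℝ) : EReal) + ((a * v + b * v' : ℝ) : EReal) := add_le_add hfu hgv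
    _ = ((a * (u + v) + b * (u' + v') : ℝ) : EReal) := by rw [← EReal.coe_add]; ring_nf

theorem convex_epiSet_coe_mul {g : Z → EReal} (hg : Convex ℝ (epiSet g)) {c : ℝ} (hc : 0 ≤ c) :
    Convex ℝ (epiSet fun x => (c : EReal) * g x) := by
  rcases hc.eq_or_lt with rfl | hc
  · simpa [epiSet] using convex_halfSpace_ge (LinearMap.snd ℝ Z ℝ).isLinear 0
  · have : (epiSet fun x => (c : EReal) * g x) =
        ((LinearMap.id : Z →ₗ[ℝ] Z).prodMap (c⁻¹ • (LinearMap.id : ℝ →ₗ[ℝ] ℝ))) ⁻¹' epiSet g := by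
      ext ⟨x, v⟩
      simp [epiSet, EReal.coe_mul_le_coe_iff hc, div_eq_inv_mul]
    rw [this]
    exact hg.linear_preimage _

end Epigraph

section FenchelMoreau

variable {X : Type*} [AddCommGroup X] [Module ℝ X] [TopologicalSpace X]

theorem ContinuousLinearMap.apply_prod_real (F : X × ℝ →L[ℝ] ℝ) (x : X) (v : ℝ) :
    F (x, v) = F (x, 0) + v * F (0, 1) := by
  rw [← smul_eq_mul, ← map_smul, ← map_add]
  simp

variable [IsTopologicalAddGroup X] [ContinuousSMul ℝ X] [LocallyConvexSpace ℝ X]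

theorem exists_nonvertical_separation_epiSet {L : X → EReal} (hcl : IsClosed (epiSet L))
    (hconv : Convex ℝ (epiSet L)) {x₀ : X} {v₀ : ℝ} (hx₀ : L x₀ = v₀) {x : X} {r : ℝ}
    (hx : ¬L x ≤ r) :
    ∃ (F : X × ℝ →L[ℝ] ℝ) (u : ℝ), 0 < F (0, 1) ∧ F (x, r) < u ∧ ∀ p ∈ epiSet L, u < F p := by
  have hbelow : (x₀, v₀ - 1) ∉ epiSet L := by
    change ¬L x₀ ≤ ((v₀ - 1 : ℝ) : EReal)
    rw [hx₀, EReal.coe_le_coe_iff]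
    linarith
  obtain ⟨F₀, u₀, hF₀x₀, hF₀⟩ := geometric_hahn_banach_point_closed hconv hcl hbelow
  obtain ⟨F₁, u₁, hF₁x, hF₁⟩ := geometric_hahn_banach_point_closed hconv hcl (x := (x, r)) hx
  have hs₀ : 0 < F₀ (0, 1) := by
    have := hF₀ (x₀, v₀) (show L x₀ ≤ v₀ from hx₀.le)
    rw [F₀.apply_prod_real] at this hF₀x₀
    linarith
  have hs₁ : 0 ≤ F₁ (0, 1) := by
    by_contra! hs₁
    obtain ⟨c, hc⟩ := exists_nat_gt ((F₁ (x₀, v₀) - u₁) / -F₁ (0, 1))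
    have := hF₁ (x₀, v₀ + c) (show L x₀ ≤ ((v₀ + c : ℝ) : EReal) by
      rw [hx₀]; exact_mod_cast le_add_of_nonneg_right c.cast_nonneg)
    rw [div_lt_iff₀ (neg_pos.2 hs₁)] at hc
    rw [F₁.apply_prod_real] at this
    rw [F₁.apply_prod_real x₀ v₀] at hc
    linarith
  -- tilting the possibly vertical hyperplane `F₁` by a multiple of `F₀` makes it non-vertical
  obtain ⟨n, hn⟩ := exists_nat_gt ((F₀ (x, r) - u₀) / (u₁ - F₁ (x, r)))
  rw [div_lt_iff₀ (sub_pos.2 hF₁x)] at hn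
  refine ⟨F₀ + (n : ℝ) • F₁, u₀ + n * u₁, ?_, ?_, fun p hp => ?_⟩
  · simp only [add_apply, smul_apply, smul_eq_mul]
    positivity
  · simp only [add_apply, smul_apply, smul_eq_mul]
    linarith
  · simp only [add_apply, smul_apply, smul_eq_mul]
    exact add_lt_add_of_lt_of_le (hF₀ p hp)
      (mul_le_mul_of_nonneg_left (hF₁ p hp).le n.cast_nonneg)

theorem le_of_forall_sub_le_conj {L : X → EReal} (hbot : ∀ x, L x ≠ ⊥)
    (hconv : Convex ℝ (epiSet L)) (hlsc : LowerSemicontinuous L) {x : X} {r : ℝ}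
    (h : ∀ p : WeakDual ℝ X, ((p x - r : ℝ) : EReal) ≤ conj L p) : L x ≤ r := by
  by_contra hx
  obtain ⟨x₀, hx₀⟩ : ∃ x₀, L x₀ ≠ ⊤ := by
    by_contra! htop
    have h0 := h 0
    simp only [conj, htop, EReal.sub_top, iSup_bot, le_bot_iff] at h0
    exact EReal.coe_ne_bot _ h0
  obtain ⟨F, u, hs, hFx, hF⟩ := exists_nonvertical_separation_epiSet hlsc.isClosed_epiSet hconv
    (EReal.coe_toReal hx₀ (hbot x₀)).symm hx
  set s := F (0, 1)
  let p : X →L[ℝ] ℝ := (-s⁻¹) • F.comp (ContinuousLinearMap.inl ℝ X ℝ)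
  have hp : ∀ y v, p y - v = -F (y, v) / s := by
    intro y v
    rw [F.apply_prod_real]
    simp only [p, smul_apply, ContinuousLinearMap.comp_apply, ContinuousLinearMap.inl_apply,
      smul_eq_mul]
    field_simp
    ring
  have hconj : conj L p ≤ (-u / s : ℝ) := by
    refine iSup_le fun y => ?_
    induction hy : L y with
    | bot => exact absurd hy (hbot y)
    | top => simp
    | coe v =>
      rw [← EReal.coe_sub, EReal.coe_le_coe_iff]
      exact (hp y v).trans_le
        (div_le_div_of_nonneg_right (neg_le_neg (hF (y, v) hy.le).le) hs.le)
  have := (h p).trans hconj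
  rw [EReal.coe_le_coe_iff] at this
  exact (div_lt_div_of_pos_right (neg_lt_neg hFx) hs).not_ge ((hp x r).symm.trans_le this)

end FenchelMoreau

section Duality

variable {T X : Type*} {f : X → EReal} {ft : T → X → EReal} {Hfam : Set (Finset T)}

theorem lagFn_le_of_mem_feasSet {H : Finset T} {lam : T → ℝ} (hlam : ∀ t ∈ H, 0 ≤ lam t)
    {x : X} (hx : x ∈ feasSet ft) : lagFn f ft H lam x ≤ f x :=
  add_le_of_nonpos_right <| Finset.sum_nonpos fun t ht =>
    mul_nonpos_of_nonneg_of_nonpos (mod_cast hlam t ht) (hx t)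

theorem dualVal_le_primalVal : dualVal f ft Hfam ≤ primalVal f ft :=
  iSup₂_le fun _ _ => iSup₂_le fun _ hlam => le_iInf₂ fun x hx =>
    (iInf_le _ x).trans (lagFn_le_of_mem_feasSet hlam hx)

theorem lagFn_zero (H : Finset T) : lagFn f ft H 0 = f := by
  ext x
  simp [lagFn]

theorem lagFn_single [DecidableEq T] {H : Finset T} {t : T} (ht : t ∈ H) (c : ℝ) :
    lagFn f ft H (Pi.single t c) = fun x => f x + c * ft t x := by
  ext x
  rw [lagFn, Finset.sum_eq_single_of_mem t ht fun s _ hs => by simp [hs], Pi.single_eq_same]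

variable [AddCommGroup X] [Module ℝ X] [TopologicalSpace X]

theorem conj_zero (L : X → EReal) : conj L 0 = -⨅ x, L x := by
  rw [EReal.neg_iInf]
  exact iSup_congr fun x => zero_sub (L x)

theorem phiVal_zero : phiVal f ft Hfam 0 = -dualVal f ft Hfam := by
  simp only [phiVal, dualVal, conj_zero, EReal.neg_iSup]

theorem mem_dualSubdiff_phiVal_zero_iff {x : X} :
    x ∈ dualSubdiff (phiVal f ft Hfam) 0 ↔ ∃ r : ℝ, dualVal f ft Hfam = r ∧
      ∀ H ∈ Hfam, ∀ lam : T → ℝ, (∀ t ∈ H, 0 ≤ lam t) →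
        ∀ q : WeakDual ℝ X, ((q x - r : ℝ) : EReal) ≤ conj (lagFn f ft H lam) q := by
  have hcoe : ∀ (r : ℝ) (q : WeakDual ℝ X),
      -(r : EReal) + ((q x - (0 : WeakDual ℝ X) x : ℝ) : EReal) = ((q x - r : ℝ) : EReal) := by
    intro r q
    rw [← EReal.coe_neg, ← EReal.coe_add]
    congr 1
    change -r + (q x - 0) = q x - r
    ring
  simp only [dualSubdiff, Set.mem_ofPred_eq, phiVal_zero]
  simp only [phiVal, le_iInf_iff]
  constructor
  · rintro ⟨⟨htop, hbot⟩, h⟩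
    obtain ⟨r, hr⟩ : ∃ r : ℝ, dualVal f ft Hfam = r :=
      ⟨_, (EReal.coe_toReal (by simpa using hbot) (by simpa using htop)).symm⟩
    refine ⟨r, hr, fun H hH lam hlam q => ?_⟩
    simpa only [hr, hcoe] using h q H hH lam hlam
  · rintro ⟨r, hr, h⟩
    refine ⟨by simp [hr], fun q H hH lam hlam => ?_⟩
    simpa only [hr, hcoe] using h H hH lam hlam q

theorem mem_dualSubdiff_of_eq_dualVal {x : X} {r : ℝ} (hx : x ∈ feasSet ft) (hfx : f x = r)
    (hD : dualVal f ft Hfam = r) : x ∈ dualSubdiff (phiVal f ft Hfam) 0 := by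
  refine mem_dualSubdiff_phiVal_zero_iff.2 ⟨r, hD, fun H _ lam hlam q => ?_⟩
  calc ((q x - r : ℝ) : EReal) = (q x : EReal) - f x := by rw [hfx, EReal.coe_sub]
    _ ≤ (q x : EReal) - lagFn f ft H lam x :=
      EReal.sub_le_sub le_rfl (lagFn_le_of_mem_feasSet hlam hx)
    _ ≤ conj (lagFn f ft H lam) q := le_iSup (fun y => (q y : EReal) - lagFn f ft H lam y) x

variable [IsTopologicalAddGroup X] [ContinuousSMul ℝ X] [LocallyConvexSpace ℝ X]

theorem add_coe_mul_le_of_forall_sub_le_conj {g : X → EReal} (hf : InGamma f) (hg : InGamma g)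
    {c : ℝ} (hc : 0 ≤ c) {x : X} {r : ℝ}
    (h : ∀ p : WeakDual ℝ X, ((p x - r : ℝ) : EReal) ≤ conj (fun y => f y + c * g y) p) :
    f x + c * g x ≤ r := by
  have hbot : ∀ y, (c : EReal) * g y ≠ ⊥ := fun y => (EReal.mul_ne_bot _ _).2
    ⟨.inl (EReal.coe_ne_bot c), .inr (hg.1.1 y), .inl (EReal.coe_ne_top c), .inl (mod_cast hc)⟩
  exact le_of_forall_sub_le_conj (fun y => EReal.add_ne_bot_iff.2 ⟨hf.1.1 y, hbot y⟩)
    (convex_epiSet_add hf.1.1 hbot hf.1.2.2 (convex_epiSet_coe_mul hg.1.2.2 hc))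
    (hf.2.add_of_ne_bot (hg.2.coe_mul hc) hf.1.1 hbot) h

theorem exists_eq_dualVal_of_mem_dualSubdiff (hf : InGamma f) (hft : ∀ t, InGamma (ft t))
    (hcov : CoveringFam Hfam) {x : X} (hx : x ∈ dualSubdiff (phiVal f ft Hfam) 0) :
    ∃ r : ℝ, dualVal f ft Hfam = r ∧ x ∈ feasSet ft ∧ f x = r := by
  classical
  obtain ⟨r, hD, h⟩ := mem_dualSubdiff_phiVal_zero_iff.1 hx
  obtain ⟨H₀, hH₀⟩ : Hfam.Nonempty := by
    by_contra! hempty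
    simp [dualVal, hempty] at hD
  have hfx : f x ≤ r := by
    have := h H₀ hH₀ 0 fun _ _ => le_rfl
    rw [lagFn_zero] at this
    exact le_of_forall_sub_le_conj hf.1.1 hf.1.2.2 hf.2 this
  have hfeas : x ∈ feasSet ft := by
    intro t
    obtain ⟨H, hH, ht⟩ : ∃ H ∈ Hfam, t ∈ H := by
      simpa using hcov.symm.subset (Set.mem_univ t)
    refine EReal.nonpos_of_forall_add_mul_le (r := r) (hf.1.1 x) fun c hc => ?_
    refine add_coe_mul_le_of_forall_sub_le_conj hf (hft t) hc ?_
    have hlam : (0 : T → ℝ) ≤ Pi.single t c := Pi.single_nonneg.2 hc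
    simpa only [lagFn_single ht] using h H hH (Pi.single t c) fun s _ => hlam s
  refine ⟨r, hD, hfeas, le_antisymm hfx ?_⟩
  calc (r : EReal) = dualVal f ft Hfam := hD.symm
    _ ≤ primalVal f ft := dualVal_le_primalVal
    _ ≤ f x := iInf₂_le x hfeas

end Duality

theorem reverse_strong_duality_iff_subdifferentiable_general {T : Type*} {X : Type*} [AddCommGroup X] [Module ℝ X] [TopologicalSpace X]
    [IsTopologicalAddGroup X] [ContinuousSMul ℝ X] [LocallyConvexSpace ℝ X]
    (f : X → EReal) (ft : T → X → EReal)
    (hf : InGamma f) (hft : ∀ t, InGamma (ft t))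
    (Hfam : Set (Finset T)) (hcov : CoveringFam Hfam) :
    ((∃ xb ∈ feasSet ft, ∃ r : ℝ, f xb = (r : EReal) ∧ dualVal f ft Hfam = (r : EReal)) ↔
      (dualSubdiff (phiVal f ft Hfam) 0).Nonempty) ∧
    ((dualSubdiff (phiVal f ft Hfam) 0).Nonempty →
      dualSubdiff (phiVal f ft Hfam) 0 = solP f ft) := by
  refine ⟨⟨fun ⟨x, hx, r, hfx, hD⟩ => ⟨x, mem_dualSubdiff_of_eq_dualVal hx hfx hD⟩, ?_⟩, ?_⟩
  · rintro ⟨x, hx⟩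
    obtain ⟨r, hD, hfeas, hfx⟩ := exists_eq_dualVal_of_mem_dualSubdiff hf hft hcov hx
    exact ⟨x, hfeas, r, hfx, hD⟩
  · rintro ⟨x₁, hx₁⟩
    obtain ⟨r, hD, hfeas₁, hfx₁⟩ := exists_eq_dualVal_of_mem_dualSubdiff hf hft hcov hx₁
    have hP : primalVal f ft = r :=
      le_antisymm (hfx₁ ▸ iInf₂_le x₁ hfeas₁) (hD ▸ dualVal_le_primalVal)
    ext x
    constructor
    · intro hx
      obtain ⟨r', hD', hfeas, hfx⟩ := exists_eq_dualVal_of_mem_dualSubdiff hf hft hcov hx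
      exact ⟨hfeas, by rw [hfx, hP, ← hD', hD]⟩
    · rintro ⟨hfeas, hfx⟩
      exact mem_dualSubdiff_of_eq_dualVal hfeas (hfx.trans hP) hD

/-- for a covering family `𝓗`, `𝓗`-reverse strong duality
(`min (P) = sup (D_𝓗) ∈ ℝ`) holds iff `φ_𝓗` is subdifferentiable at `0_{X*}`;
in that case `∂φ_𝓗(0_{X*}) = sol (P)`. -/
theorem reverse_strong_duality_iff_subdifferentiable {T : Type*} {X : Type*} [AddCommGroup X] [Module ℝ X] [TopologicalSpace X]
    [IsTopologicalAddGroup X] [ContinuousSMul ℝ X] [LocallyConvexSpace ℝ X] [T2Space X]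
    (f : X → EReal) (ft : T → X → EReal)
    (hf : InGamma f) (hft : ∀ t, InGamma (ft t))
    (Hfam : Set (Finset T)) (hHmem : ∀ H ∈ Hfam, H.Nonempty) (hcov : CoveringFam Hfam)
    (hEdom : ∃ x ∈ feasSet ft, f x ≠ ⊤) :
    ((∃ xb ∈ feasSet ft, ∃ r : ℝ, f xb = (r : EReal) ∧ dualVal f ft Hfam = (r : EReal)) ↔
      (dualSubdiff (phiVal f ft Hfam) 0).Nonempty) ∧
    ((dualSubdiff (phiVal f ft Hfam) 0).Nonempty →
      dualSubdiff (phiVal f ft Hfam) 0 = solP f ft) :=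
  reverse_strong_duality_iff_subdifferentiable_general f ft hf hft Hfam hcov

end
end

section
/- (Optimality condition for (D_H)) Assume min(P) = sup(D_H) ≠ +∞, i.e., the primal value is attained and equals the dual value, and let H ∈ H and λ ∈ ℝ_+^H. Then the following are equivalent: (i) (H, λ) ∈ sol(D_H); (ii) for every x̄ ∈ sol(P), one has 0_{X*} ∈ ∂( f + Σ_{t∈H} λ_t f_t )(x̄) and λ_t f_t(x̄) = 0 for all t ∈ H; (iii) there exists x̄ ∈ sol(P) such that 0_{X*} ∈ ∂( f + Σ_{t∈H} λ_t f_t )(x̄) and λ_t f_t(x̄) = 0 for all t ∈ H. -/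
open Pointwise Filter Topology

noncomputable section

theorem zero_mem_fenchelSubdiff_iff_iInf_eq {X : Type*} [AddCommGroup X] [Module ℝ X]
    [TopologicalSpace X] {g : X → EReal} {xb : X} :
    (0 : WeakDual ℝ X) ∈ fenchelSubdiff g xb ↔ ⨅ x, g x = g xb := by
  have hmin : (0 : WeakDual ℝ X) ∈ fenchelSubdiff g xb ↔ ∀ x, g xb ≤ g x :=
    forall_congr' fun x => by
      change g xb + ((0 - 0 : ℝ) : EReal) ≤ g x ↔ _
      rw [sub_zero, EReal.coe_zero, add_zero]
  rw [hmin]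
  exact ⟨fun h => (iInf_le g xb).antisymm (le_iInf h), fun h x => h ▸ iInf_le g x⟩

section LagrangeDuality

variable {T X : Type*} {f : X → EReal} {ft : T → X → EReal} {H : Finset T} {lam : T → ℝ} {xb : X}

theorem mul_nonpos_of_mem_feasSet (hxb : xb ∈ feasSet ft) (hlam : ∀ t ∈ H, 0 ≤ lam t) :
    ∀ t ∈ H, (lam t : EReal) * ft t xb ≤ 0 := fun t ht =>
  mul_nonpos_of_nonneg_of_nonpos (EReal.coe_nonneg.mpr (hlam t ht)) (hxb t)

theorem lagFn_eq_of_complementary_slackness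
    (hslack : ∀ t ∈ H, (lam t : EReal) * ft t xb = 0) : lagFn f ft H lam xb = f xb := by
  rw [lagFn, Finset.sum_eq_zero hslack, add_zero]

/-- The penalty terms are nonpositive at a feasible point, so they cannot add up to `0` unless
each of them vanishes. -/
theorem complementary_slackness_of_le_lagFn (hxb : xb ∈ feasSet ft)
    (hlam : ∀ t ∈ H, 0 ≤ lam t) (hbot : f xb ≠ ⊥) (htop : f xb ≠ ⊤)
    (hle : f xb ≤ lagFn f ft H lam xb) : ∀ t ∈ H, (lam t : EReal) * ft t xb = 0 := by
  have hterms := mul_nonpos_of_mem_feasSet hxb hlam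
  lift f xb to ℝ using ⟨htop, hbot⟩ with v hv
  have hsum : 0 ≤ ∑ t ∈ H, (lam t : EReal) * ft t xb := by
    rw [lagFn, ← hv] at hle
    exact (EReal.addLECancellable_coe v).add_le_add_iff_left.mp (by rwa [add_zero])
  exact (Finset.sum_eq_zero_iff_of_nonpos hterms).mp
    ((Finset.sum_nonpos hterms).antisymm hsum)

end LagrangeDuality

theorem dual_optimality_condition_general {T : Type*} {X : Type*} [AddCommGroup X] [Module ℝ X] [TopologicalSpace X]
    (f : X → EReal) (ft : T → X → EReal)
    (hf : IsProperConvex f)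
    (Hfam : Set (Finset T))
    (hattain : ∃ x ∈ feasSet ft, f x = primalVal f ft)
    (hdual : primalVal f ft = dualVal f ft Hfam)
    (hnetop : primalVal f ft ≠ ⊤)
    (H : Finset T) (lam : T → ℝ) (hlam : ∀ t ∈ H, 0 ≤ lam t) :
    ((⨅ x : X, lagFn f ft H lam x) = dualVal f ft Hfam ↔
      ∀ xb ∈ solP f ft,
        (0 : WeakDual ℝ X) ∈ fenchelSubdiff (lagFn f ft H lam) xb ∧
        ∀ t ∈ H, (lam t : EReal) * ft t xb = 0) ∧
    ((⨅ x : X, lagFn f ft H lam x) = dualVal f ft Hfam ↔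
      ∃ xb ∈ solP f ft,
        (0 : WeakDual ℝ X) ∈ fenchelSubdiff (lagFn f ft H lam) xb ∧
        ∀ t ∈ H, (lam t : EReal) * ft t xb = 0) := by
  obtain ⟨xs, hxs⟩ := hattain
  have forward : (⨅ x, lagFn f ft H lam x) = dualVal f ft Hfam → ∀ xb ∈ solP f ft,
      (0 : WeakDual ℝ X) ∈ fenchelSubdiff (lagFn f ft H lam) xb ∧
        ∀ t ∈ H, (lam t : EReal) * ft t xb = 0 := by
    rintro hopt xb ⟨hfeas, hval⟩
    have hinf : (⨅ x, lagFn f ft H lam x) = f xb := by rw [hopt, hval, hdual]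
    have hslack := complementary_slackness_of_le_lagFn hfeas hlam (hf.1 xb)
      (hval ▸ hnetop) (hinf ▸ iInf_le _ xb)
    refine ⟨?_, hslack⟩
    rw [zero_mem_fenchelSubdiff_iff_iInf_eq, hinf, lagFn_eq_of_complementary_slackness hslack]
  have backward : (∃ xb ∈ solP f ft,
      (0 : WeakDual ℝ X) ∈ fenchelSubdiff (lagFn f ft H lam) xb ∧
        ∀ t ∈ H, (lam t : EReal) * ft t xb = 0) →
      (⨅ x, lagFn f ft H lam x) = dualVal f ft Hfam := by
    rintro ⟨xb, ⟨-, hval⟩, hzero, hslack⟩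
    rw [zero_mem_fenchelSubdiff_iff_iInf_eq.mp hzero, lagFn_eq_of_complementary_slackness hslack,
      hval, hdual]
  exact ⟨⟨fun hopt => forward hopt, fun h => backward ⟨xs, hxs, h xs hxs⟩⟩,
    ⟨fun hopt => ⟨xs, hxs, forward hopt xs hxs⟩, backward⟩⟩

/-- optimality condition for `(D_𝓗)`: if `min (P) = sup (D_𝓗) ≠ +∞`
(primal value attained and equal to the dual value), then for `H ∈ 𝓗`, `λ ∈ ℝ₊^H`:
`(H,λ) ∈ sol (D_𝓗)` iff the KKT-type condition holds for every `x̄ ∈ sol (P)`, iff it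
holds for some `x̄ ∈ sol (P)`. -/
theorem dual_optimality_condition {T : Type*} {X : Type*} [AddCommGroup X] [Module ℝ X] [TopologicalSpace X]
    [IsTopologicalAddGroup X] [ContinuousSMul ℝ X] [LocallyConvexSpace ℝ X] [T2Space X]
    (f : X → EReal) (ft : T → X → EReal)
    (hf : IsProperConvex f) (hft : ∀ t, IsProperConvex (ft t))
    (Hfam : Set (Finset T)) (hHne : Hfam.Nonempty) (hHmem : ∀ H ∈ Hfam, H.Nonempty)
    (hattain : ∃ x ∈ feasSet ft, f x = primalVal f ft)
    (hdual : primalVal f ft = dualVal f ft Hfam)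
    (hnetop : primalVal f ft ≠ ⊤)
    (H : Finset T) (hH : H ∈ Hfam) (lam : T → ℝ) (hlam : ∀ t ∈ H, 0 ≤ lam t) :
    ((⨅ x : X, lagFn f ft H lam x) = dualVal f ft Hfam ↔
      ∀ xb ∈ solP f ft,
        (0 : WeakDual ℝ X) ∈ fenchelSubdiff (lagFn f ft H lam) xb ∧
        ∀ t ∈ H, (lam t : EReal) * ft t xb = 0) ∧
    ((⨅ x : X, lagFn f ft H lam x) = dualVal f ft Hfam ↔
      ∃ xb ∈ solP f ft,
        (0 : WeakDual ℝ X) ∈ fenchelSubdiff (lagFn f ft H lam) xb ∧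
        ∀ t ∈ H, (lam t : EReal) * ft t xb = 0) :=
  dual_optimality_condition_general f ft hf Hfam hattain hdual hnetop H lam hlam

end
end
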